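/- arXiv:1602.00651 — 2 statements merged into one kernel-verified Lean document; each statement's English description precedes it below -/
import Mathlib

section
/- Let K be a field, m ≥ 1, s ∈ ℤ^m, and let P, Q ∈ K[X]^{m×m} be nonsingular matrices in s-weak Popov form that are left-unimodularly equivalent (Q = U·P for some U ∈ K[X]^{m×m} with det U a nonzero constant). Then P and Q have the same s-pivot degree. -/
/-!
If the rows of `P` are in `s`-weak Popov form and `q = u ⬝ P ≠ 0`, take `k₀` to be, among the rows
maximising `deg u_k + sdeg_s P_k`, the one with the largest pivot index. Its pivot term
`u_{k₀} P_{k₀, piv k₀}` strictly dominates every other contribution to the columns from `piv k₀`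
on, so `q` has pivot index `piv k₀` and pivot degree `deg u_{k₀} + deg P_{k₀, piv k₀}`, which is at
least `deg P_{k₀, piv k₀}`. Applied to the rows of `Q = U P` and of `P = U⁻¹ Q`, this bounds each
pivot degree of either matrix by the matching pivot degree of the other.
-/

open Polynomial Matrix

/-- Degree of a polynomial as an element of `WithBot ℤ`, with `degZ 0 = ⊥`. -/
noncomputable def degZ {K : Type*} [Field K] (p : Polynomial K) : WithBot ℤ :=
  p.degree.map (fun n : ℕ => (n : ℤ))

/-- The `s`-degree of a row vector `p`: `max_j (deg p_j + s_j)`. -/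
noncomputable def sdeg {K : Type*} [Field K] {ι : Type*} [Fintype ι]
    (s : ι → ℤ) (p : ι → Polynomial K) : WithBot ℤ :=
  Finset.univ.sup fun j => degZ (p j) + (s j : WithBot ℤ)

/-- `j` is the `s`-pivot index of the row `p`: the largest index at which the
`s`-degree of `p` is attained. -/
def IsPivotIndex {K : Type*} [Field K] {ι : Type*} [Fintype ι] [LinearOrder ι]
    (s : ι → ℤ) (p : ι → Polynomial K) (j : ι) : Prop :=
  degZ (p j) + (s j : WithBot ℤ) = sdeg s p ∧
    ∀ k, j < k → degZ (p k) + (s k : WithBot ℤ) ≠ sdeg s p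

/-- `P` is in `s`-Popov form: it is nonsingular, the `s`-pivot entries are monic and
on the diagonal, and in each column the nonpivot entries have degree less than
the pivot entry. -/
def IsPopov {K : Type*} [Field K] {m : ℕ} (s : Fin m → ℤ)
    (P : Matrix (Fin m) (Fin m) (Polynomial K)) : Prop :=
  P.det ≠ 0 ∧ (∀ i, IsPivotIndex s (P i) i) ∧ (∀ i, (P i i).Monic) ∧
    ∀ i j, i ≠ j → (P i j).degree < (P j j).degree

/-- `p` is an interpolant for `(E, J)`: `∑ i, (row i of E) ⋅ (p i)(J) = 0`. -/
def IsInterpolant {K : Type*} [Field K] {ι n : Type*} [Fintype ι] [Fintype n] [DecidableEq n]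
    (E : Matrix ι n K) (J : Matrix n n K) (p : ι → Polynomial K) : Prop :=
  ∑ i, Matrix.vecMul (E i) (Polynomial.aeval J (p i)) = 0

/-- `P` is an interpolation basis for `(E, J)`: its rows form a basis of the
`K[X]`-module of interpolants for `(E, J)`. -/
def IsInterpolationBasis {K : Type*} [Field K] {ι n : Type*} [Fintype ι] [Fintype n]
    [DecidableEq n] (E : Matrix ι n K) (J : Matrix n n K)
    (P : Matrix ι ι (Polynomial K)) : Prop :=
  LinearIndependent (Polynomial K) (fun i => P i) ∧
    (Submodule.span (Polynomial K) (Set.range fun i => P i) : Set (ι → Polynomial K))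
      = {p | IsInterpolant E J p}

/-- The product `Q ⋅ E`: the matrix over `K` whose `i`-th row is `∑ j, (E j) ⋅ (Q i j)(J)`. -/
noncomputable def polMulMat {K : Type*} [Field K] {κ ι n : Type*} [Fintype κ] [Fintype ι]
    [Fintype n] [DecidableEq n]
    (Q : Matrix κ ι (Polynomial K)) (E : Matrix ι n K) (J : Matrix n n K) : Matrix κ n K :=
  fun i => ∑ j, Matrix.vecMul (E j) (Polynomial.aeval J (Q i j))

/-- The `s`-leading matrix of `R`: if row `i` has `s`-degree `d`, its `(i,j)` entry is
the coefficient of degree `d - s j` in `R i j` (and `0` if row `i` is zero). -/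
noncomputable def leadingMatrix {K : Type*} [Field K] {ι : Type*} [Fintype ι]
    (s : ι → ℤ) (R : Matrix ι ι (Polynomial K)) : Matrix ι ι K := fun i j =>
  WithBot.recBotCoe 0
    (fun d => if 0 ≤ d - s j then (R i j).coeff (d - s j).toNat else 0)
    (sdeg s (R i))

section Degree

variable {K : Type*} [Field K]

lemma degZ_eq_bot_iff {p : K[X]} : degZ p = ⊥ ↔ p = 0 := by
  simp [degZ]

lemma degZ_le_degZ_iff {p q : K[X]} : degZ p ≤ degZ q ↔ p.degree ≤ q.degree :=
  WithBot.map_le_iff _ Nat.cast_le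

lemma degZ_lt_degZ_iff {p q : K[X]} : degZ p < degZ q ↔ p.degree < q.degree := by
  simp only [← not_le, degZ_le_degZ_iff]

lemma zero_le_degZ {p : K[X]} (hp : p ≠ 0) : 0 ≤ degZ p := by
  have h := (degZ_le_degZ_iff (p := 1) (q := p)).2 (degree_one.trans_le (zero_le_degree_iff.2 hp))
  simpa [degZ] using h

lemma degZ_mul (p q : K[X]) : degZ (p * q) = degZ p + degZ q := by
  simp only [degZ, degree_mul]
  cases p.degree <;> cases q.degree <;> rfl

lemma degZ_sum_add_le {α : Type*} (t : Finset α) (f : α → K[X]) (a : ℤ) :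
    degZ (∑ k ∈ t, f k) + a ≤ t.sup fun k => degZ (f k) + a := by
  rcases t.eq_empty_or_nonempty with rfl | ht
  · simp [degZ]
  obtain ⟨k, hk, hmax⟩ := t.exists_max_image (fun k => (f k).degree) ht
  have hsum : degZ (∑ k ∈ t, f k) ≤ degZ (f k) :=
    degZ_le_degZ_iff.2 ((degree_sum_le t f).trans (Finset.sup_le hmax))
  exact (add_le_add_left hsum _).trans (Finset.le_sup (f := fun k => degZ (f k) + a) hk)

lemma degZ_sum_add_lt {α : Type*} {t : Finset α} {f : α → K[X]} {a : ℤ} {D : WithBot ℤ}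
    (hD : ⊥ < D) (h : ∀ k ∈ t, degZ (f k) + a < D) : degZ (∑ k ∈ t, f k) + a < D :=
  (degZ_sum_add_le t f a).trans_lt ((Finset.sup_lt_iff hD).2 h)

lemma degZ_add_eq_left_of_add_lt {p q : K[X]} {a : ℤ} (h : degZ q + a < degZ p + a) :
    degZ (p + q) = degZ p := by
  rw [WithBot.add_lt_add_iff_right WithBot.coe_ne_bot, degZ_lt_degZ_iff] at h
  rw [degZ, degree_add_eq_left_of_degree_lt h, degZ]

end Degree

section Pivot

variable {K : Type*} [Field K] {ι : Type*} [Fintype ι] {s : ι → ℤ} {p : ι → K[X]}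

lemma degZ_add_le_sdeg (s : ι → ℤ) (p : ι → K[X]) (c : ι) : degZ (p c) + s c ≤ sdeg s p :=
  Finset.le_sup (f := fun c => degZ (p c) + (s c : WithBot ℤ)) (Finset.mem_univ c)

lemma degZ_mul_add_le (s : ι → ℤ) (a : K[X]) (p : ι → K[X]) (c : ι) :
    degZ (a * p c) + s c ≤ degZ a + sdeg s p := by
  rw [degZ_mul, add_assoc]
  exact add_le_add_right (degZ_add_le_sdeg s p c) _

lemma sdeg_eq_of_forall_le {D : WithBot ℤ} (hle : ∀ c, degZ (p c) + s c ≤ D) {j : ι}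
    (hj : degZ (p j) + s j = D) : sdeg s p = D :=
  le_antisymm (Finset.sup_le fun c _ => hle c) (hj ▸ degZ_add_le_sdeg s p j)

variable [LinearOrder ι] {j : ι}

lemma IsPivotIndex.degZ_add_lt_sdeg (hj : IsPivotIndex s p j) {c : ι} (hjc : j < c) :
    degZ (p c) + s c < sdeg s p :=
  (degZ_add_le_sdeg s p c).lt_of_ne (hj.2 c hjc)

lemma IsPivotIndex.degZ_mul_add_lt (hj : IsPivotIndex s p j) {a : K[X]} (ha : a ≠ 0) {c : ι}
    (hjc : j < c) : degZ (a * p c) + s c < degZ a + sdeg s p := by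
  rw [degZ_mul, add_assoc]
  exact WithBot.add_lt_add_left (mt degZ_eq_bot_iff.1 ha) (hj.degZ_add_lt_sdeg hjc)

lemma IsPivotIndex.eq {j' : ι} (hj : IsPivotIndex s p j) (hj' : IsPivotIndex s p j') :
    j = j' := by
  by_contra hne
  rcases lt_or_gt_of_ne hne with h | h
  · exact hj.2 j' h hj'.1
  · exact hj'.2 j h hj.1

lemma isPivotIndex_of_forall_le {D : WithBot ℤ} (hle : ∀ c, degZ (p c) + s c ≤ D)
    (hj : degZ (p j) + s j = D) (hlt : ∀ c, j < c → degZ (p c) + s c < D) :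
    IsPivotIndex s p j := by
  have hD := sdeg_eq_of_forall_le hle hj
  exact ⟨hD ▸ hj, fun c hc => hD ▸ (hlt c hc).ne⟩

end Pivot

section PredictablePivot

variable {K : Type*} [Field K] {ι : Type*} [Fintype ι] {s : ι → ℤ}

/-- The bound on `sdeg s (u ᵥ* P)` from the predictable degree property; it is attained when the
rows of `P` are in `s`-weak Popov form. -/
noncomputable def predictedDeg (s : ι → ℤ) (u : ι → K[X]) (P : Matrix ι ι K[X]) : WithBot ℤ :=
  Finset.univ.sup fun k => degZ (u k) + sdeg s (P k)

lemma degZ_vecMul_add_le (s : ι → ℤ) (u : ι → K[X]) (P : Matrix ι ι K[X]) (c : ι) :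
    degZ ((u ᵥ* P) c) + s c ≤ predictedDeg s u P :=
  (degZ_sum_add_le _ _ _).trans <| Finset.sup_le fun k _ =>
    (degZ_mul_add_le s (u k) (P k) c).trans
      (Finset.le_sup (f := fun k => degZ (u k) + sdeg s (P k)) (Finset.mem_univ k))

lemma bot_lt_predictedDeg (s : ι → ℤ) {u : ι → K[X]} {P : Matrix ι ι K[X]} (hq : u ᵥ* P ≠ 0) :
    ⊥ < predictedDeg s u P := by
  obtain ⟨c, hc⟩ := Function.ne_iff.1 hq
  refine bot_lt_iff_ne_bot.2 fun hM => hc ?_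
  have h := le_bot_iff.1 (hM ▸ degZ_vecMul_add_le s u P c)
  exact degZ_eq_bot_iff.1 ((WithBot.add_eq_bot.1 h).resolve_right WithBot.coe_ne_bot)

variable [LinearOrder ι] {P : Matrix ι ι K[X]} {piv : ι → ι}

lemma exists_dominant_row (hP : ∀ k, IsPivotIndex s (P k) (piv k))
    (hpiv : Function.Injective piv) {u : ι → K[X]} (hM : ⊥ < predictedDeg s u P) :
    ∃ k₀, u k₀ ≠ 0 ∧ degZ (u k₀) + sdeg s (P k₀) = predictedDeg s u P ∧
      ∀ k c, piv k₀ ≤ c → (k ≠ k₀ ∨ piv k₀ < c) →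
        degZ (u k * P k c) + s c < predictedDeg s u P := by
  classical
  set T : ι → WithBot ℤ := fun k => degZ (u k) + sdeg s (P k)
  have hne : (Finset.univ : Finset ι).Nonempty :=
    Finset.nonempty_iff_ne_empty.2 fun h => by simp [predictedDeg, h] at hM
  obtain ⟨k₁, -, hk₁⟩ := Finset.exists_mem_eq_sup _ hne T
  obtain ⟨k₀, hk₀F, hmax⟩ :=
    (Finset.univ.filter fun k => T k = predictedDeg s u P).exists_max_image piv
      ⟨k₁, by simp [T, predictedDeg, hk₁]⟩
  have hk₀ : T k₀ = predictedDeg s u P := (Finset.mem_filter.1 hk₀F).2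
  have hu : u k₀ ≠ 0 := by
    rintro h
    simp [T, h, degZ, ← hk₀] at hM
  refine ⟨k₀, hu, hk₀, fun k c hc hkc => ?_⟩
  by_cases huk : u k = 0
  · simpa [huk, degZ] using hM
  by_cases hT : T k = predictedDeg s u P
  · have hkc' : piv k < c := by
      rcases (hmax k (by simp [hT])).lt_or_eq with h | h
      · exact h.trans_le hc
      · exact h ▸ hkc.resolve_left (not_not.2 (hpiv h))
    exact hT ▸ (hP k).degZ_mul_add_lt huk hkc'
  · exact (degZ_mul_add_le s (u k) (P k) c).trans_lt
      ((Finset.le_sup (f := T) (Finset.mem_univ k)).lt_of_ne hT)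

theorem exists_pivot_natDegree_le_of_isPivotIndex_vecMul
    (hP : ∀ k, IsPivotIndex s (P k) (piv k)) (hpiv : Function.Injective piv) {u : ι → K[X]}
    (hq : u ᵥ* P ≠ 0) {j : ι} (hj : IsPivotIndex s (u ᵥ* P) j) :
    ∃ k, piv k = j ∧ (P k j).natDegree ≤ ((u ᵥ* P) j).natDegree := by
  have hM := bot_lt_predictedDeg s hq
  obtain ⟨k₀, hu, hk₀, hlt⟩ := exists_dominant_row hP hpiv hM
  have hcol : ∀ c, (u ᵥ* P) c = ∑ k, u k * P k c := fun c => rfl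
  have hlead : degZ (u k₀ * P k₀ (piv k₀)) + s (piv k₀) = predictedDeg s u P := by
    rw [degZ_mul, add_assoc, (hP k₀).1, hk₀]
  have hrest : degZ (∑ k ∈ Finset.univ.erase k₀, u k * P k (piv k₀)) + s (piv k₀) <
      predictedDeg s u P :=
    degZ_sum_add_lt hM fun k hk => hlt k _ le_rfl (Or.inl (Finset.ne_of_mem_erase hk))
  have hpivot : degZ ((u ᵥ* P) (piv k₀)) + s (piv k₀) = predictedDeg s u P := by
    rw [hcol, ← Finset.add_sum_erase _ _ (Finset.mem_univ k₀),
      degZ_add_eq_left_of_add_lt (hlead ▸ hrest), hlead]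
  obtain rfl : j = piv k₀ := hj.eq <| isPivotIndex_of_forall_le (degZ_vecMul_add_le s u P) hpivot
    fun c hc => degZ_sum_add_lt hM fun k _ => hlt k c hc.le (Or.inr hc)
  refine ⟨k₀, rfl, natDegree_le_natDegree (degZ_le_degZ_iff.1 ?_)⟩
  rw [WithBot.add_right_cancel WithBot.coe_ne_bot (hpivot.trans hlead.symm), degZ_mul]
  exact le_add_of_nonneg_left (zero_le_degZ hu)

end PredictablePivot

lemma Matrix.row_ne_zero_of_det_ne_zero {R : Type*} [CommRing R] {n : Type*} [Fintype n]
    [DecidableEq n] {A : Matrix n n R} (hA : A.det ≠ 0) (i : n) : A i ≠ 0 :=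
  fun h => hA (Matrix.det_eq_zero_of_row_eq_zero i (congrFun h))

theorem weak_popov_equiv_same_pivot_degree_general {K : Type*} [Field K] {m : ℕ}
    (s : Fin m → ℤ) (P Q U : Matrix (Fin m) (Fin m) (Polynomial K))
    (hPdet : P.det ≠ 0) (hQdet : Q.det ≠ 0)
    (pivP pivQ : Fin m → Fin m)
    (hpivP : ∀ i, IsPivotIndex s (P i) (pivP i)) (hPinj : Function.Injective pivP)
    (hpivQ : ∀ i, IsPivotIndex s (Q i) (pivQ i)) (hQinj : Function.Injective pivQ)
    (hU : ∃ c : K, c ≠ 0 ∧ U.det = Polynomial.C c) (hQU : Q = U * P) :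
    ∀ i i', pivP i = pivQ i' →
      (P i (pivP i)).natDegree = (Q i' (pivQ i')).natDegree := by
  intro i i' hii'
  obtain ⟨c, hc, hUdet⟩ := hU
  have hPU : P = U⁻¹ * Q := by
    rw [hQU, ← Matrix.mul_assoc, Matrix.nonsing_inv_mul U (hUdet ▸ isUnit_C.2 hc.isUnit),
      Matrix.one_mul]
  have hQrow (i' : Fin m) : Q i' = U i' ᵥ* P := by rw [hQU]; rfl
  have hProw (i : Fin m) : P i = U⁻¹ i ᵥ* Q := by rw [hPU]; rfl
  obtain ⟨k, hk, hPQ⟩ := exists_pivot_natDegree_le_of_isPivotIndex_vecMul hpivP hPinj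
    (hQrow i' ▸ Matrix.row_ne_zero_of_det_ne_zero hQdet i') (hQrow i' ▸ hpivQ i')
  obtain ⟨k', hk', hQP⟩ := exists_pivot_natDegree_le_of_isPivotIndex_vecMul hpivQ hQinj
    (hProw i ▸ Matrix.row_ne_zero_of_det_ne_zero hPdet i) (hProw i ▸ hpivP i)
  rw [hPinj (hk.trans hii'.symm), ← hQrow] at hPQ
  rw [hQinj (hk'.trans hii'), ← hProw] at hQP
  rw [hii'] at hQP ⊢
  exact le_antisymm hPQ hQP

/-- two left-unimodularly equivalent nonsingular matrices in `s`-weak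
Popov form have the same `s`-pivot degree. -/
theorem weak_popov_equiv_same_pivot_degree {K : Type*} [Field K] {m : ℕ} (hm : 1 ≤ m)
    (s : Fin m → ℤ) (P Q U : Matrix (Fin m) (Fin m) (Polynomial K))
    (hPdet : P.det ≠ 0) (hQdet : Q.det ≠ 0)
    (pivP pivQ : Fin m → Fin m)
    (hpivP : ∀ i, IsPivotIndex s (P i) (pivP i)) (hPinj : Function.Injective pivP)
    (hpivQ : ∀ i, IsPivotIndex s (Q i) (pivQ i)) (hQinj : Function.Injective pivQ)
    (hU : ∃ c : K, c ≠ 0 ∧ U.det = Polynomial.C c) (hQU : Q = U * P) :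
    ∀ i i', pivP i = pivQ i' →
      (P i (pivP i)).natDegree = (Q i' (pivQ i')).natDegree :=
  weak_popov_equiv_same_pivot_degree_general s P Q U hPdet hQdet pivP pivQ hpivP hPinj hpivQ hQinj
    hU hQU
end

section
/- Let K be a field, m ≥ 1, s ∈ ℤ^m, let P ∈ K[X]^{m×m} be in s-Popov form with column degree δ = (δ_1,…,δ_m), and let R ∈ K[X]^{m×m} be left-unimodularly equivalent to P and (−δ)-reduced. Then R has column degree δ, the (−δ)-leading matrix lm_{−δ}(R) is invertible, and P = lm_{−δ}(R)^{−1}·R. -/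
open Polynomial Matrix

/-!
Let `D i` be the degree of row `i` of `U`. The columns of the Popov form `P` have degrees `δ`
and their coefficients of degree `δ` form the identity matrix, so `R = U * P` has entries
`R i j` of degree at most `D i + δ j` with coefficient `(U i j).coeff (D i)` there. Hence the
`(-δ)`-row degrees of `R` are `D` and `lm_{-δ}(R)` is the row-leading matrix `L` of `U`. Since
`det U` is constant while its coefficient of degree `∑ D` is `det L ≠ 0`, every `D i` vanishes:
`U = L` is constant, so `P = L⁻¹ R`, and a constant invertible factor preserves column degrees.
-/

theorem Polynomial.coeff_prod_sum_of_natDegree_le {R ι : Type*} [CommSemiring R] (s : Finset ι)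
    (f : ι → R[X]) (d : ι → ℕ) (h : ∀ i ∈ s, (f i).natDegree ≤ d i) :
    (∏ i ∈ s, f i).coeff (∑ i ∈ s, d i) = ∏ i ∈ s, (f i).coeff (d i) := by
  induction s using Finset.cons_induction with
  | empty => simp
  | cons a s ha ih =>
    have hs : ∀ i ∈ s, (f i).natDegree ≤ d i := fun i hi => h i (Finset.mem_cons_of_mem hi)
    rw [Finset.prod_cons, Finset.sum_cons, Finset.prod_cons,
      coeff_mul_add_eq_of_natDegree_le (h a (Finset.mem_cons_self a s))
        ((natDegree_prod_le s f).trans (Finset.sum_le_sum hs)), ih hs]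

theorem Matrix.coeff_det_sum_of_natDegree_le {R n : Type*} [CommRing R] [Fintype n]
    [DecidableEq n] (M : Matrix n n R[X]) (D : n → ℕ) (h : ∀ i j, (M i j).natDegree ≤ D i) :
    M.det.coeff (∑ i, D i) = (of fun i j => (M i j).coeff (D i)).det := by
  rw [det_apply, det_apply, finsetSum_coeff]
  refine Finset.sum_congr rfl fun σ _ => ?_
  rw [coeff_smul, ← Equiv.sum_comp σ D,
    coeff_prod_sum_of_natDegree_le _ _ _ fun i _ => h (σ i) i]
  rfl

theorem Matrix.natDegree_mul_apply_le {R l n o : Type*} [Semiring R] [Fintype n]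
    {U : Matrix l n R[X]} {P : Matrix n o R[X]} {D : l → ℕ} {δ : o → ℕ}
    (hU : ∀ i k, (U i k).natDegree ≤ D i) (hP : ∀ k j, (P k j).natDegree ≤ δ j) (i : l) (j : o) :
    ((U * P) i j).natDegree ≤ D i + δ j :=
  natDegree_sum_le_of_forall_le _ _ fun k _ =>
    natDegree_mul_le.trans (add_le_add (hU i k) (hP k j))

theorem Matrix.coeff_mul_apply_add_of_coeff_eq_one {R l n : Type*} [Semiring R] [Fintype n]
    [DecidableEq n] {U : Matrix l n R[X]} {P : Matrix n n R[X]} {D : l → ℕ} {δ : n → ℕ}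
    (hU : ∀ i k, (U i k).natDegree ≤ D i) (hP : ∀ k j, (P k j).natDegree ≤ δ j)
    (hlead : ∀ k j, (P k j).coeff (δ j) = (1 : Matrix n n R) k j) (i : l) (j : n) :
    ((U * P) i j).coeff (D i + δ j) = (U i j).coeff (D i) := by
  simp only [mul_apply, finsetSum_coeff, coeff_mul_add_eq_of_natDegree_le (hU i _) (hP _ j),
    hlead, one_apply, mul_ite, mul_one, mul_zero, Finset.sum_ite_eq', Finset.mem_univ, if_true]

section RowDegree

variable {K ι κ : Type*} [Field K] [Fintype κ]

noncomputable def rowNatDegree (U : Matrix ι κ K[X]) (i : ι) : ℕ :=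
  Finset.univ.sup fun k => (U i k).natDegree

theorem natDegree_le_rowNatDegree (U : Matrix ι κ K[X]) (i : ι) (k : κ) :
    (U i k).natDegree ≤ rowNatDegree U i :=
  Finset.le_sup (f := fun k => (U i k).natDegree) (Finset.mem_univ k)

theorem exists_coeff_rowNatDegree_ne_zero {U : Matrix ι κ K[X]} {i : ι} (hi : U i ≠ 0) :
    ∃ k, (U i k).coeff (rowNatDegree U i) ≠ 0 := by
  obtain ⟨k, hk⟩ := Function.ne_iff.mp hi
  obtain ⟨j, -, hj⟩ := Finset.exists_mem_eq_sup Finset.univ ⟨k, Finset.mem_univ k⟩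
    fun k => (U i k).natDegree
  by_cases hUj : U i j = 0
  · have hzero : rowNatDegree U i = 0 := by simp only [rowNatDegree, hj, hUj, natDegree_zero]
    refine ⟨k, fun hcoeff => hk ?_⟩
    have hk0 : (U i k).natDegree = 0 := Nat.le_zero.mp (hzero ▸ natDegree_le_rowNatDegree U i k)
    rw [hzero] at hcoeff
    rw [eq_C_of_natDegree_eq_zero hk0, hcoeff, map_zero, Pi.zero_apply]
  · exact ⟨j, by rw [rowNatDegree, hj]; exact leadingCoeff_ne_zero.mpr hUj⟩

end RowDegree

theorem degZ_of_ne_zero {K : Type*} [Field K] {p : K[X]} (hp : p ≠ 0) :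
    degZ p = ((p.natDegree : ℤ) : WithBot ℤ) := by
  rw [degZ, degree_eq_natDegree hp]
  rfl

theorem sdeg_neg_eq_of_natDegree_le {K ι : Type*} [Field K] [Fintype ι] {p : ι → K[X]} {d : ℕ}
    {δ : ι → ℕ} (hle : ∀ j, (p j).natDegree ≤ d + δ j) (hex : ∃ j, (p j).coeff (d + δ j) ≠ 0) :
    sdeg (fun j => -(δ j : ℤ)) p = ((d : ℤ) : WithBot ℤ) := by
  apply le_antisymm
  · refine Finset.sup_le fun j _ => ?_
    by_cases hpj : p j = 0
    · simp [degZ, hpj]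
    · rw [degZ_of_ne_zero hpj, ← WithBot.coe_add, WithBot.coe_le_coe]
      have := hle j
      dsimp only
      omega
  · obtain ⟨j, hj⟩ := hex
    have hpj : p j ≠ 0 := fun h => hj (by rw [h, coeff_zero])
    have hdeg : (p j).natDegree = d + δ j := le_antisymm (hle j) (le_natDegree_of_ne_zero hj)
    refine le_trans ?_ (Finset.le_sup (Finset.mem_univ j))
    rw [degZ_of_ne_zero hpj, hdeg, ← WithBot.coe_add, WithBot.coe_le_coe]
    dsimp only
    omega

theorem leadingMatrix_neg_apply {K ι : Type*} [Field K] [Fintype ι] {R : Matrix ι ι K[X]}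
    {δ : ι → ℕ} {i : ι} {d : ℕ} (hd : sdeg (fun j => -(δ j : ℤ)) (R i) = ((d : ℤ) : WithBot ℤ))
    (j : ι) : leadingMatrix (fun j => -(δ j : ℤ)) R i j = (R i j).coeff (d + δ j) := by
  rw [leadingMatrix, hd, WithBot.recBotCoe_coe, if_pos (by omega)]
  congr 1
  omega

theorem leadingMatrix_neg_mul {K ι : Type*} [Field K] [Fintype ι] [DecidableEq ι]
    {U P : Matrix ι ι K[X]} {δ : ι → ℕ} (hU : ∀ i, U i ≠ 0)
    (hP : ∀ k j, (P k j).natDegree ≤ δ j)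
    (hlead : ∀ k j, (P k j).coeff (δ j) = (1 : Matrix ι ι K) k j) :
    leadingMatrix (fun j => -(δ j : ℤ)) (U * P) =
      of fun i j => (U i j).coeff (rowNatDegree U i) := by
  ext i j
  have hdeg := natDegree_mul_apply_le (natDegree_le_rowNatDegree U) hP i
  have hcoeff := coeff_mul_apply_add_of_coeff_eq_one (natDegree_le_rowNatDegree U) hP hlead i
  obtain ⟨k, hk⟩ := exists_coeff_rowNatDegree_ne_zero (hU i)
  rw [leadingMatrix_neg_apply (sdeg_neg_eq_of_natDegree_le hdeg ⟨k, (hcoeff k).symm ▸ hk⟩),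
    hcoeff, of_apply]

theorem rowNatDegree_eq_zero {K ι : Type*} [Field K] [Fintype ι] [DecidableEq ι]
    {U : Matrix ι ι K[X]} (hdet : U.det.natDegree = 0)
    (hlead : (of fun i j => (U i j).coeff (rowNatDegree U i)).det ≠ 0) (i : ι) :
    rowNatDegree U i = 0 := by
  have hsum : ∑ i, rowNatDegree U i = 0 := by
    by_contra hne
    rw [← coeff_det_sum_of_natDegree_le U _ (natDegree_le_rowNatDegree U)] at hlead
    exact hlead (coeff_eq_zero_of_natDegree_lt (hdet ▸ Nat.pos_of_ne_zero hne))
  exact Finset.sum_eq_zero_iff.mp hsum i (Finset.mem_univ i)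

theorem eq_map_C_of_rowNatDegree_eq_zero {K ι : Type*} [Field K] [Fintype ι]
    {U : Matrix ι ι K[X]} (h : ∀ i, rowNatDegree U i = 0) :
    U = (of fun i j => (U i j).coeff (rowNatDegree U i)).map C := by
  ext1 i j
  rw [map_apply, of_apply, h i]
  exact eq_C_of_natDegree_eq_zero (Nat.le_zero.mp (h i ▸ natDegree_le_rowNatDegree U i j))

theorem sup_degree_map_C_mul_le {K ι : Type*} [Field K] [Fintype ι] (A : Matrix ι ι K)
    (P : Matrix ι ι K[X]) (j : ι) :
    (Finset.univ.sup fun i => ((A.map C * P) i j).degree) ≤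
      Finset.univ.sup fun k => (P k j).degree :=
  Finset.sup_le fun _ _ => (degree_sum_le _ _).trans <| Finset.sup_mono_fun fun _ _ =>
    (degree_mul_le _ _).trans <| (add_le_add_left degree_C_le _).trans_eq (zero_add _)

theorem Matrix.map_C_inv_mul_map_C_mul_cancel {K ι : Type*} [Field K] [Fintype ι]
    [DecidableEq ι] {A : Matrix ι ι K} (hA : IsUnit A.det) (P : Matrix ι ι K[X]) :
    A⁻¹.map C * (A.map C * P) = P := by
  rw [← Matrix.mul_assoc, ← Matrix.map_mul, nonsing_inv_mul A hA,
    Matrix.map_one _ (map_zero _) (map_one _), Matrix.one_mul]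

theorem sup_degree_map_C_mul {K ι : Type*} [Field K] [Fintype ι] [DecidableEq ι]
    {A : Matrix ι ι K} (hA : IsUnit A.det) (P : Matrix ι ι K[X]) (j : ι) :
    (Finset.univ.sup fun i => ((A.map C * P) i j).degree) =
      Finset.univ.sup fun k => (P k j).degree := by
  refine le_antisymm (sup_degree_map_C_mul_le A P j) ?_
  conv_lhs => rw [← map_C_inv_mul_map_C_mul_cancel hA P]
  exact sup_degree_map_C_mul_le _ _ j

section Popov

variable {K : Type*} [Field K] {m : ℕ} {s : Fin m → ℤ} {P : Matrix (Fin m) (Fin m) K[X]}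

theorem IsPopov.degree_le (hP : IsPopov s P) (k j : Fin m) : (P k j).degree ≤ (P j j).degree := by
  rcases eq_or_ne k j with rfl | hkj
  · exact le_rfl
  · exact (hP.2.2.2 k j hkj).le

theorem IsPopov.natDegree_le (hP : IsPopov s P) (k j : Fin m) :
    (P k j).natDegree ≤ (P j j).natDegree :=
  natDegree_le_natDegree (hP.degree_le k j)

theorem IsPopov.coeff_natDegree (hP : IsPopov s P) (k j : Fin m) :
    (P k j).coeff (P j j).natDegree = (1 : Matrix (Fin m) (Fin m) K) k j := by
  rcases eq_or_ne k j with rfl | hkj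
  · rw [one_apply_eq]
    exact hP.2.2.1 k
  · rw [one_apply_ne hkj]
    exact coeff_eq_zero_of_degree_lt
      ((hP.2.2.2 k j hkj).trans_le degree_le_natDegree)

theorem IsPopov.sup_degree (hP : IsPopov s P) (j : Fin m) :
    (Finset.univ.sup fun i => (P i j).degree) = (P j j).natDegree := by
  rw [← degree_eq_natDegree (hP.2.2.1 j).ne_zero]
  exact le_antisymm (Finset.sup_le fun k _ => hP.degree_le k j)
    (Finset.le_sup (f := fun i => (P i j).degree) (Finset.mem_univ j))

end Popov

theorem reduced_equiv_recovers_popov_general {K : Type*} [Field K] {m : ℕ}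
    (s : Fin m → ℤ) (P R U : Matrix (Fin m) (Fin m) (Polynomial K))
    (hP : IsPopov s P) (δ : Fin m → ℕ) (hδ : ∀ j, (P j j).natDegree = δ j)
    (hU : ∃ c : K, c ≠ 0 ∧ U.det = Polynomial.C c) (hRU : R = U * P)
    (hred : (leadingMatrix (fun j => -(δ j : ℤ)) R).det ≠ 0) :
    (∀ j, (Finset.univ.sup fun i => (R i j).degree) = (δ j : WithBot ℕ)) ∧
      IsUnit (leadingMatrix (fun j => -(δ j : ℤ)) R) ∧
      P = ((leadingMatrix (fun j => -(δ j : ℤ)) R)⁻¹).map Polynomial.C * R := by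
  obtain ⟨c, hc, hdetU⟩ := hU
  have hUrow : ∀ i, U i ≠ 0 := fun i hi =>
    C_ne_zero.mpr hc (hdetU ▸ det_eq_zero_of_row_eq_zero i (congrFun hi))
  have hLU : leadingMatrix (fun j => -(δ j : ℤ)) R =
      of fun i j => (U i j).coeff (rowNatDegree U i) := by
    rw [hRU]
    exact leadingMatrix_neg_mul hUrow (fun k j => hδ j ▸ hP.natDegree_le k j)
      (fun k j => hδ j ▸ hP.coeff_natDegree k j)
  set L := leadingMatrix (fun j => -(δ j : ℤ)) R
  have hUL : U = L.map C := by
    rw [hLU]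
    exact eq_map_C_of_rowNatDegree_eq_zero
      (rowNatDegree_eq_zero (by rw [hdetU, natDegree_C]) (hLU ▸ hred))
  have hL : IsUnit L.det := isUnit_iff_ne_zero.mpr hred
  refine ⟨fun j => ?_, (isUnit_iff_isUnit_det L).mpr hL, ?_⟩
  · rw [hRU, hUL, sup_degree_map_C_mul hL, hP.sup_degree, hδ]
  · rw [hRU, hUL, map_C_inv_mul_map_C_mul_cancel hL]

/-- if `P` is in `s`-Popov form with column degree `δ` and `R` is
left-unimodularly equivalent to `P` and `(-δ)`-reduced, then `R` has column degree `δ`,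
the `(-δ)`-leading matrix of `R` is invertible, and `P = lm_{-δ}(R)⁻¹ ⋅ R`. -/
theorem reduced_equiv_recovers_popov {K : Type*} [Field K] {m : ℕ} (hm : 1 ≤ m)
    (s : Fin m → ℤ) (P R U : Matrix (Fin m) (Fin m) (Polynomial K))
    (hP : IsPopov s P) (δ : Fin m → ℕ) (hδ : ∀ j, (P j j).natDegree = δ j)
    (hU : ∃ c : K, c ≠ 0 ∧ U.det = Polynomial.C c) (hRU : R = U * P)
    (hred : (leadingMatrix (fun j => -(δ j : ℤ)) R).det ≠ 0) :
    (∀ j, (Finset.univ.sup fun i => (R i j).degree) = (δ j : WithBot ℕ)) ∧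
      IsUnit (leadingMatrix (fun j => -(δ j : ℤ)) R) ∧
      P = ((leadingMatrix (fun j => -(δ j : ℤ)) R)⁻¹).map Polynomial.C * R :=
  reduced_equiv_recovers_popov_general s P R U hP δ hδ hU hRU hred
end
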